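/- For any integer n ≥ 2, the sum over k from 0 to n-1 of ((-n)_k (n-1)_k (-1/2)_k) / ((1)_k^2 (1/2)_k) equals (1/(2n-1)) (4n(n-1) + (-1)^n binomial(2n-2, n)). -/

import Mathlib

/-!
Because `(-n)_k` vanishes for `k > n`, the sum of the summand `t(n, k)` up to `k = n` is a
terminating hypergeometric sum `S(n)`. Zeilberger's algorithm finds a certificate `G(n, k)` such that
`(n - 1)(2n + 1) t(n + 1, k) - (n + 1)(2n - 1) t(n, k) = G(n, k + 1) - G(n, k)`;
summing over `k` telescopes to the first-order recurrence
`(n - 1)(2n + 1) S(n + 1) = (n + 1)(2n - 1) S(n)`, so `S(n) = 4n(n - 1)/(2n - 1)`.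
The sum in the theorem is `S(n)` minus its last term `t(n, n) = (-1)^(n+1) C(2n-2, n)/(2n - 1)`.
-/

open Finset

/-- The Pochhammer symbol (rising factorial): (a)_0 = 1, (a)_k = a(a+1)⋯(a+k-1). -/
def poch (a : ℚ) : ℕ → ℚ
  | 0 => 1
  | k + 1 => poch a k * (a + k)

open Nat

theorem poch_succ (a : ℚ) (k : ℕ) : poch a (k + 1) = poch a k * (a + k) := rfl

theorem poch_eq_eval_ascPochhammer (a : ℚ) (k : ℕ) :
    poch a k = (ascPochhammer ℚ k).eval a := by
  induction k with
  | zero => simp [poch]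
  | succ k ih => rw [poch_succ, ih, ascPochhammer_succ_eval]

theorem poch_pos {a : ℚ} (ha : 0 < a) (k : ℕ) : 0 < poch a k := by
  rw [poch_eq_eval_ascPochhammer]
  exact ascPochhammer_pos k a ha

theorem poch_one (k : ℕ) : poch 1 k = k ! := by
  rw [poch_eq_eval_ascPochhammer, ascPochhammer_eval_one]

theorem mul_poch_add_one (a : ℚ) (k : ℕ) : a * poch (a + 1) k = poch a k * (a + k) := by
  rw [← poch_succ, poch_eq_eval_ascPochhammer, poch_eq_eval_ascPochhammer,
    ascPochhammer_succ_left]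
  simp

theorem poch_neg_natCast_self (n : ℕ) : poch (-n) n = (-1) ^ n * n ! := by
  rw [poch_eq_eval_ascPochhammer, ascPochhammer_eval_neg_eq_descPochhammer,
    descPochhammer_eval_eq_descFactorial, descFactorial_self]

theorem natCast_choose_eq_poch_div {m k : ℕ} (hk : 1 ≤ k) :
    ((m + k - 1).choose k : ℚ) = poch m k / k ! := by
  rw [cast_choose_eq_ascPochhammer_div, poch_eq_eval_ascPochhammer]
  congr
  omega

def summand (n k : ℕ) : ℚ :=
  poch (-(n : ℚ)) k * poch ((n : ℚ) - 1) k * poch (-(1/2)) k / (poch 1 k ^ 2 * poch (1/2) k)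

theorem summand_succ (n k : ℕ) :
    summand n (k + 1) =
      summand n k * ((k - n) * (n - 1 + k) * (k - 1/2) / ((k + 1) ^ 2 * (k + 1/2))) := by
  have h1 : poch 1 k ≠ 0 := (poch_pos one_pos k).ne'
  have h2 : poch (1/2) k ≠ 0 := (poch_pos (by norm_num) k).ne'
  simp only [summand, poch_succ]
  field_simp
  ring

theorem summand_self_add_one (n : ℕ) : summand n (n + 1) = 0 := by
  simp [summand_succ]

theorem summand_succ_left_mul (n k : ℕ) :
    summand (n + 1) k * ((n + 1 - k) * (n - 1)) = summand n k * ((n + 1) * (n - 1 + k)) := by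
  have hneg := mul_poch_add_one (-((n : ℚ) + 1)) k
  have hpos := mul_poch_add_one ((n : ℚ) - 1) k
  rw [show -((n : ℚ) + 1) + 1 = -n by ring] at hneg
  rw [sub_add_cancel] at hpos
  simp only [summand, cast_add, cast_one, add_sub_cancel_right]
  set R := poch (-(1/2)) k / (poch 1 k ^ 2 * poch (1/2) k)
  linear_combination R * (n - 1) * poch n k * hneg + R * (n + 1) * poch (-n) k * hpos

def wzCert (n : ℕ) : ℕ → ℚ
  | 0 => 0
  | k + 1 => 2 * (2 * (k + 1) ^ 2 - (2 * n ^ 2 + 4) * (k + 1) + n ^ 4 + n ^ 2 + 2) *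
      (n + k - 1) * (2 * k - 1) * summand n k / (n * (n - 1) ^ 2 * (n + 1))

theorem wzCert_self_add_two (n : ℕ) : wzCert n (n + 2) = 0 := by
  simp [wzCert, summand_self_add_one]

theorem wz_relation {n k : ℕ} (hn : 2 ≤ n) (hk : k ≤ n + 1) :
    (n - 1) * (2 * n + 1) * summand (n + 1) k - (n + 1) * (2 * n - 1) * summand n k =
      wzCert n (k + 1) - wzCert n k := by
  have hn' : (2 : ℚ) ≤ n := by exact_mod_cast hn
  have hn1 : (n : ℚ) - 1 ≠ 0 := by linarith
  have hn0 : (n : ℚ) ≠ 0 := by linarith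
  have hn2 : (n : ℚ) + 1 ≠ 0 := by linarith
  cases k with
  | zero =>
    simp only [wzCert, summand, poch, CharP.cast_eq_zero]
    field_simp
    ring
  | succ j =>
    have hj : (j : ℚ) ≤ n := by exact_mod_cast (by omega : j ≤ n)
    have hnj : (n : ℚ) + 1 - j ≠ 0 := by linarith
    have hshift : summand (n + 1) j =
        summand n j * ((n + 1) * (n - 1 + j)) / ((n + 1 - j) * (n - 1)) := by
      rw [eq_div_iff (mul_ne_zero hnj hn1), summand_succ_left_mul]
    simp only [wzCert, summand_succ, hshift]
    push_cast
    field_simp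
    ring

theorem sum_summand_succ {n : ℕ} (hn : 2 ≤ n) :
    (n - 1) * (2 * n + 1) * ∑ k ∈ range (n + 2), summand (n + 1) k =
      (n + 1) * (2 * n - 1) * ∑ k ∈ range (n + 1), summand n k := by
  have htele : ∑ k ∈ range (n + 2),
      ((n - 1) * (2 * n + 1) * summand (n + 1) k - (n + 1) * (2 * n - 1) * summand n k) = 0 := by
    rw [sum_congr rfl fun k hk => wz_relation hn (by simpa [Nat.lt_succ_iff] using hk),
      sum_range_sub, wzCert_self_add_two, wzCert, sub_zero]
  rw [sum_sub_distrib, ← mul_sum, ← mul_sum, sum_range_succ (summand n) (n + 1),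
    summand_self_add_one, add_zero, sub_eq_zero] at htele
  exact htele

theorem sum_summand {n : ℕ} (hn : 2 ≤ n) :
    ∑ k ∈ range (n + 1), summand n k = 4 * n * (n - 1) / (2 * n - 1) := by
  induction n, hn using Nat.le_induction with
  | base => norm_num [sum_range_succ, summand, poch]
  | succ n hn ih =>
    have hn' : (2 : ℚ) ≤ n := by exact_mod_cast hn
    have hrec := sum_summand_succ hn
    rw [ih, mul_assoc _ (2 * (n : ℚ) - 1), mul_div_cancel₀ _ (by linarith)] at hrec
    rw [eq_div_iff (by push_cast; linarith)]
    apply mul_left_cancel₀ (show (n : ℚ) - 1 ≠ 0 by linarith)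
    push_cast
    linear_combination hrec

theorem summand_self {n : ℕ} (hn : 1 ≤ n) :
    summand n n = (-1) ^ (n + 1) * ((2 * n - 2).choose n : ℚ) / (2 * n - 1) := by
  have hn' : (1 : ℚ) ≤ n := by exact_mod_cast hn
  have h2 : (2 : ℚ) * n - 1 ≠ 0 := by linarith
  have hchoose := natCast_choose_eq_poch_div (m := n - 1) hn
  rw [show n - 1 + n - 1 = 2 * n - 2 by omega, cast_sub hn, cast_one] at hchoose
  have hhalf : poch (-(1/2)) n = -poch (1/2) n / (2 * n - 1) := by
    have h := mul_poch_add_one (-(1/2)) n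
    rw [show -(1/2 : ℚ) + 1 = 1/2 by norm_num] at h
    rw [eq_div_iff h2]
    linear_combination -2 * h
  have hfac : (n ! : ℚ) ≠ 0 := by positivity
  have hpos : poch (1/2) n ≠ 0 := (poch_pos (by norm_num) n).ne'
  rw [summand, poch_neg_natCast_self, poch_one, hchoose, hhalf]
  field_simp
  ring

theorem stmt3 (n : ℕ) (hn : 2 ≤ n) :
    ∑ k ∈ Finset.range n,
      poch (-(n : ℚ)) k * poch ((n : ℚ) - 1) k * poch (-(1/2)) k /
        (poch 1 k ^ 2 * poch (1/2) k)
    = (1 / (2 * (n : ℚ) - 1)) *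
        (4 * (n : ℚ) * ((n : ℚ) - 1) + (-1) ^ n * (Nat.choose (2 * n - 2) n : ℚ)) := by
  have hfull := sum_summand hn
  rw [sum_range_succ, summand_self (by omega)] at hfull
  change ∑ k ∈ range n, summand n k = _
  rw [eq_sub_of_add_eq hfull]
  ring
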